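/- arXiv:1812.05215 — 3 statements merged into one kernel-verified Lean document; each statement's English description precedes it below -/
import Mathlib

section
/- Let δ : ℕ → ℝ satisfy δ nondecreasing and nonnegative with δ(0)=0. Define I(d) = Σ_{i=1}^{d} (2i − d)·δ(i). Then I(d) ≥ 0 for all d ≥ 0, I(0) = 0, and I(d) → ∞ as d → ∞ provided there exists D such that δ(D) > 0. -/
/-!
Passing from `d` to `d + 1` lowers every weight `2i - d` by one and adds the new term
`(d + 1) δ(d + 1)`, so `I(d + 1) - I(d) = (d + 1) δ(d + 1) - ∑_{i ≤ d} δ(i) ≥ δ(d + 1)` for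
nondecreasing `δ`. Hence `I(d)` dominates the partial sums `∑_{i ≤ d} δ(i)`, which are nonnegative
and, once `δ(D) > 0`, grow at least like `(d - D) δ(D)`.
-/

noncomputable def whittleIndex (δ : ℕ → ℝ) (d : ℕ) : ℝ :=
  ∑ i ∈ Finset.Icc 1 d, ((2 * i : ℝ) - d) * δ i

open Finset Filter

section

variable {δ : ℕ → ℝ}

theorem whittleIndex_zero (δ : ℕ → ℝ) : whittleIndex δ 0 = 0 := by
  simp [whittleIndex]

theorem whittleIndex_succ (δ : ℕ → ℝ) (d : ℕ) :
    whittleIndex δ (d + 1) =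
      whittleIndex δ d - ∑ i ∈ Icc 1 d, δ i + ((d : ℝ) + 1) * δ (d + 1) := by
  have lower_weights : ∑ i ∈ Icc 1 d, ((2 * i : ℝ) - ↑(d + 1)) * δ i
      = ∑ i ∈ Icc 1 d, (((2 * i : ℝ) - d) * δ i - δ i) :=
    sum_congr rfl fun i _ => by push_cast; ring
  rw [whittleIndex, sum_Icc_succ_top (by omega), lower_weights, sum_sub_distrib, whittleIndex]
  push_cast
  ring

theorem whittleIndex_add_le_succ (hδ : Monotone δ) (d : ℕ) :
    whittleIndex δ d + δ (d + 1) ≤ whittleIndex δ (d + 1) := by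
  have sum_le : ∑ i ∈ Icc 1 d, δ i ≤ d * δ (d + 1) := by
    simpa using sum_le_card_nsmul (Icc 1 d) δ (δ (d + 1)) fun i hi => hδ (by grind)
  rw [whittleIndex_succ]
  linarith

theorem sum_Icc_le_whittleIndex (hδ : Monotone δ) (d : ℕ) :
    ∑ i ∈ Icc 1 d, δ i ≤ whittleIndex δ d := by
  induction d with
  | zero => simp [whittleIndex_zero]
  | succ d ih =>
    rw [sum_Icc_succ_top (by omega)]
    linarith [whittleIndex_add_le_succ hδ d]

theorem sub_mul_le_sum_Icc_of_monotone (hδ : Monotone δ) (hnonneg : ∀ i, 0 ≤ δ i) (D d : ℕ) :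
    ((d - D : ℕ) : ℝ) * δ D ≤ ∑ i ∈ Icc 1 d, δ i :=
  calc ((d - D : ℕ) : ℝ) * δ D = #(Ioc D d) • δ D := by simp
    _ ≤ ∑ i ∈ Ioc D d, δ i := card_nsmul_le_sum _ _ _ fun i hi => hδ (mem_Ioc.1 hi).1.le
    _ ≤ ∑ i ∈ Icc 1 d, δ i :=
      sum_le_sum_of_subset_of_nonneg (fun i hi => by grind) fun i _ _ => hnonneg i

theorem tendsto_sum_Icc_atTop_of_monotone (hδ : Monotone δ) (hnonneg : ∀ i, 0 ≤ δ i) {D : ℕ}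
    (hD : 0 < δ D) : Tendsto (fun d => ∑ i ∈ Icc 1 d, δ i) atTop atTop :=
  tendsto_atTop_mono (sub_mul_le_sum_Icc_of_monotone hδ hnonneg D)
    ((tendsto_natCast_atTop_atTop.comp (tendsto_sub_atTop_nat D)).atTop_mul_const hD)

end

theorem whittleIndex_nonneg_zero_tendsto_general (δ : ℕ → ℝ)
    (hmono : ∀ i, δ i ≤ δ (i + 1)) (hnonneg : ∀ i, 0 ≤ δ i) :
    (∀ d : ℕ, 0 ≤ whittleIndex δ d) ∧
    whittleIndex δ 0 = 0 ∧
    ((∃ D : ℕ, 0 < δ D) →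
      Filter.Tendsto (whittleIndex δ) Filter.atTop Filter.atTop) := by
  have hδ : Monotone δ := monotone_nat_of_le_succ hmono
  refine ⟨fun d => ?_, whittleIndex_zero δ, fun ⟨D, hD⟩ => ?_⟩
  · exact (sum_nonneg fun i _ => hnonneg i).trans (sum_Icc_le_whittleIndex hδ d)
  · exact tendsto_atTop_mono (sum_Icc_le_whittleIndex hδ)
      (tendsto_sum_Icc_atTop_of_monotone hδ hnonneg hD)

theorem whittleIndex_nonneg_zero_tendsto (δ : ℕ → ℝ) (h0 : δ 0 = 0)
    (hmono : ∀ i, δ i ≤ δ (i + 1)) (hnonneg : ∀ i, 0 ≤ δ i) :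
    (∀ d : ℕ, 0 ≤ whittleIndex δ d) ∧
    whittleIndex δ 0 = 0 ∧
    ((∃ D : ℕ, 0 < δ D) →
      Filter.Tendsto (whittleIndex δ) Filter.atTop Filter.atTop) :=
  whittleIndex_nonneg_zero_tendsto_general δ hmono hnonneg
end

section
/- Let δ : ℕ → ℝ with δ(0)=0, and D ≥ 1. Suppose J and m satisfy m = D(D+1)·J − 2·Σ_{i=1}^{D−1} Σ_{j=1}^{i} δ(j) and additionally δ(D) + (f(D+1) + f(D−1))/2 = m + (f(1)+f(0))/2 where f(d) = d(d+1)J − 2Σ_{i=1}^{d−1}Σ_{j=1}^{i}δ(j) for d ≤ D, f(D+1) = m + f(1)/2 − J, f(0)=0, f(1)=2J. Then m = Σ_{i=1}^{D} (2i − D)·δ(i). -/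
/-!
The continuity equation at the threshold, after substituting `m` and `f (D - 1)`, collapses to
`∑_{j=1}^{D} δ j = (D + 1) J`. Hence the term `D (D + 1) J` of `m` equals `D ∑_{j=1}^{D} δ j`, and
exchanging the order of summation turns the double sum into `∑_{j=1}^{D} (D - j) δ j`.
-/

open Finset

theorem Finset.sum_Icc_one_eq_sum_Icc_pred_add {M : Type*} [AddCommMonoid M] (G : ℕ → M)
    (hG : G 0 = 0) (n : ℕ) : ∑ i ∈ Icc 1 n, G i = ∑ i ∈ Icc 1 (n - 1), G i + G n := by
  cases n with
  | zero => simp [hG]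
  | succ n => rw [Nat.add_sub_cancel, sum_Icc_succ_top (Nat.le_add_left 1 n)]

theorem Finset.sum_Icc_sum_Icc_eq_sum_Icc_succ_mul {R : Type*} [CommRing R] (g : ℕ → R)
    (n : ℕ) : ∑ i ∈ Icc 1 n, ∑ j ∈ Icc 1 i, g j = ∑ j ∈ Icc 1 (n + 1), ((n + 1 : R) - j) * g j := by
  induction n with
  | zero => simp
  | succ n ih =>
    rw [sum_Icc_succ_top (Nat.le_add_left 1 n), ih, sum_Icc_succ_top (Nat.le_add_left 1 (n + 1)),
      ← sum_add_distrib]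
    push_cast
    rw [sub_self, zero_mul, add_zero]
    exact sum_congr rfl fun j _ => by ring

theorem whittle_index_from_threshold_equations_general (δ : ℕ → ℝ)
    (D : ℕ) (hD : 1 ≤ D) (J m : ℝ) (f : ℕ → ℝ)
    (hf : ∀ d : ℕ, d ≤ D →
      f d = (d : ℝ) * (d + 1) * J -
        2 * ∑ i ∈ Finset.Icc 1 (d - 1), ∑ j ∈ Finset.Icc 1 i, δ j)
    (hfD1 : f (D + 1) = m + f 1 / 2 - J)
    (hf0 : f 0 = 0) (hf1 : f 1 = 2 * J)
    (hm : m = (D : ℝ) * (D + 1) * J -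
      2 * ∑ i ∈ Finset.Icc 1 (D - 1), ∑ j ∈ Finset.Icc 1 i, δ j)
    (hcont : δ D + (f (D + 1) + f (D - 1)) / 2 = m + (f 1 + f 0) / 2) :
    m = ∑ i ∈ Finset.Icc 1 D, ((2 * i : ℝ) - D) * δ i := by
  obtain ⟨k, rfl⟩ : ∃ k, D = k + 1 := ⟨D - 1, by omega⟩
  rw [Nat.add_sub_cancel] at hm hcont
  rw [hfD1, hf1, hf0, hf k k.le_succ] at hcont
  have hsplit := sum_Icc_one_eq_sum_Icc_pred_add (fun i => ∑ j ∈ Icc 1 i, δ j) (by simp) k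
  have hsum : ∑ j ∈ Icc 1 (k + 1), δ j = ((k : ℝ) + 2) * J := by
    rw [sum_Icc_succ_top (Nat.le_add_left 1 k)]
    push_cast at hm
    linear_combination hcont + hm / 2 - hsplit
  calc m = ((k : ℝ) + 1) * ∑ j ∈ Icc 1 (k + 1), δ j
        - 2 * ∑ j ∈ Icc 1 (k + 1), ((k + 1 : ℝ) - j) * δ j := by
          rw [hm, hsum, sum_Icc_sum_Icc_eq_sum_Icc_succ_mul]
          push_cast
          ring
    _ = ∑ i ∈ Icc 1 (k + 1), ((2 * i : ℝ) - (k + 1 : ℕ)) * δ i := by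
          rw [mul_sum, mul_sum, ← sum_sub_distrib]
          push_cast
          exact sum_congr rfl fun j _ => by ring

theorem whittle_index_from_threshold_equations (δ : ℕ → ℝ) (h0 : δ 0 = 0)
    (D : ℕ) (hD : 1 ≤ D) (J m : ℝ) (f : ℕ → ℝ)
    (hf : ∀ d : ℕ, d ≤ D →
      f d = (d : ℝ) * (d + 1) * J -
        2 * ∑ i ∈ Finset.Icc 1 (d - 1), ∑ j ∈ Finset.Icc 1 i, δ j)
    (hfD1 : f (D + 1) = m + f 1 / 2 - J)
    (hf0 : f 0 = 0) (hf1 : f 1 = 2 * J)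
    (hm : m = (D : ℝ) * (D + 1) * J -
      2 * ∑ i ∈ Finset.Icc 1 (D - 1), ∑ j ∈ Finset.Icc 1 i, δ j)
    (hcont : δ D + (f (D + 1) + f (D - 1)) / 2 = m + (f 1 + f 0) / 2) :
    m = ∑ i ∈ Finset.Icc 1 D, ((2 * i : ℝ) - D) * δ i :=
  whittle_index_from_threshold_equations_general δ D hD J m f hf hfD1 hf0 hf1 hm hcont
end

section
/- Consider a Markov chain on {0,1,…} with transition probabilities: from state 0, go to 1 with probability λ and stay with probability 1−λ; from state 1 ≤ d < D, go to d+1 with probability λ, to d−1 with probability μ, stay with probability 1−λ−μ; from state d ≥ D, go to 0 with probability ε, to d+1 with probability λ(1−ε), to d−1 with probability μ(1−ε), stay otherwise. Suppose λ ≠ μ and π is a stationary distribution. Then for 0 ≤ d < D, π_d = (λ/μ)^d · (π_0 − εσ/(λ−μ)) + εσ/(λ−μ), where σ = Σ_{d≥D} π_d. -/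
/-- Birth–death step kernel on ℕ with up-rate `lam` and down-rate `mu`. -/
noncomputable def bdKernel (lam mu : ℝ) (j d : ℕ) : ℝ :=
  if j = 0 then (if d = 1 then lam else if d = 0 then 1 - lam else 0)
  else if d = j + 1 then lam
  else if d = j - 1 then mu
  else if d = j then 1 - lam - mu
  else 0

/-- Mean-field chain kernel: below threshold `D` a pure birth–death step;
    from states `≥ D`, reset to `0` with probability `eps`, otherwise a
    birth–death step scaled by `1 - eps`. -/
noncomputable def mfKernel (lam mu eps : ℝ) (D : ℕ) (j d : ℕ) : ℝ :=
  if j < D then bdKernel lam mu j d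
  else eps * (if d = 0 then 1 else 0) + (1 - eps) * bdKernel lam mu j d

theorem meanfield_stationary_below_threshold
    (lam mu eps : ℝ) (D : ℕ) (hD : 1 ≤ D)
    (hlam : 0 < lam) (hmu : 0 < mu) (hlm : lam + mu ≤ 1) (hne : lam ≠ mu)
    (heps : 0 < eps) (heps1 : eps ≤ 1)
    (π : ℕ → ℝ) (hπnn : ∀ d, 0 ≤ π d) (hπsum : Summable π)
    (hπ1 : ∑' d, π d = 1)
    (hstat : ∀ d, π d = ∑' j, π j * mfKernel lam mu eps D j d) :
    ∀ d : ℕ, d < D →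
      π d = (lam / mu) ^ d *
          (π 0 - eps * (∑' j : ℕ, if D ≤ j then π j else 0) / (lam - mu)) +
        eps * (∑' j : ℕ, if D ≤ j then π j else 0) / (lam - mu) := by
  set σ : ℝ := ∑' j : ℕ, if D ≤ j then π j else 0 with hσdef
  have hσsum : Summable (fun j : ℕ => if D ≤ j then π j else 0) := by
    apply hπsum.of_nonneg_of_le
    · intro j; by_cases h : D ≤ j <;> simp [h, hπnn j]
    · intro j; by_cases h : D ≤ j <;> simp [h, hπnn j]
  -- split of the stationary tsum
  have hsplit : ∀ d : ℕ, ∑' j, π j * mfKernel lam mu eps D j d =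
      (if d = 0 then eps * σ else 0) +
      ∑ j ∈ ({d - 1, d, d + 1} : Finset ℕ),
        π j * ((if j < D then 1 else 1 - eps) * bdKernel lam mu j d) := by
    intro d
    have hfun : ∀ j, π j * mfKernel lam mu eps D j d =
        (if d = 0 then eps * (if D ≤ j then π j else 0) else 0) +
        π j * ((if j < D then 1 else 1 - eps) * bdKernel lam mu j d) := by
      intro j
      by_cases hj : j < D
      · have hDj : ¬ D ≤ j := not_le.mpr hj
        by_cases hd0 : d = 0 <;> simp [mfKernel, hj, hDj, hd0]
      · have hDj : D ≤ j := not_lt.mp hj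
        by_cases hd0 : d = 0 <;> simp [mfKernel, hj, hDj, hd0] <;> ring
    have hA : Summable (fun j : ℕ =>
        if d = 0 then eps * (if D ≤ j then π j else 0) else 0) := by
      by_cases hd0 : d = 0
      · simpa [hd0] using hσsum.mul_left eps
      · simp [hd0]
    have hzero : ∀ j ∉ ({d - 1, d, d + 1} : Finset ℕ),
        π j * ((if j < D then 1 else 1 - eps) * bdKernel lam mu j d) = 0 := by
      intro j hj
      simp only [Finset.mem_insert, Finset.mem_singleton] at hj
      push_neg at hj
      obtain ⟨h1, h2, h3⟩ := hj
      have hbd : bdKernel lam mu j d = 0 := by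
        unfold bdKernel
        rcases eq_or_ne j 0 with rfl | hj0
        · have e1 : d ≠ 1 := by omega
          have e2 : d ≠ 0 := by omega
          simp [e1, e2]
        · have e1 : d ≠ j + 1 := by omega
          have e2 : d ≠ j - 1 := by omega
          have e3 : d ≠ j := Ne.symm h2
          simp [hj0, e1, e2, e3]
      rw [hbd]; ring
    have hB : Summable (fun j : ℕ =>
        π j * ((if j < D then 1 else 1 - eps) * bdKernel lam mu j d)) :=
      summable_of_ne_finset_zero hzero
    calc ∑' j, π j * mfKernel lam mu eps D j d
        = ∑' j, ((if d = 0 then eps * (if D ≤ j then π j else 0) else 0) +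
            π j * ((if j < D then 1 else 1 - eps) * bdKernel lam mu j d)) :=
          tsum_congr hfun
      _ = (∑' j, if d = 0 then eps * (if D ≤ j then π j else 0) else 0) +
            ∑' j, π j * ((if j < D then 1 else 1 - eps) * bdKernel lam mu j d) :=
          Summable.tsum_add hA hB
      _ = (if d = 0 then eps * σ else 0) +
            ∑ j ∈ ({d - 1, d, d + 1} : Finset ℕ),
              π j * ((if j < D then 1 else 1 - eps) * bdKernel lam mu j d) := by
          rw [tsum_eq_sum hzero]
          congr 1
          by_cases hd0 : d = 0
          · simp only [hd0, eq_self_iff_true, if_true]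
            rw [tsum_mul_left]
          · simp [hd0]
  -- From here on we may assume 2 ≤ D for the nontrivial balance equations.
  -- balance at state 0 (needs 2 ≤ D)
  have h0 : 2 ≤ D → lam * π 0 - mu * π 1 = eps * σ := by
    intro hD2
    have h := hstat 0
    rw [hsplit 0] at h
    have h0D : (0 : ℕ) < D := by omega
    have h1D : (1 : ℕ) < D := by omega
    have hsum : ∑ j ∈ ({0 - 1, 0, 0 + 1} : Finset ℕ),
        π j * ((if j < D then 1 else 1 - eps) * bdKernel lam mu j 0) =
        π 0 * (1 - lam) + π 1 * mu := by
      have : ({0 - 1, 0, 0 + 1} : Finset ℕ) = {0, 1} := by decide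
      rw [this]
      rw [Finset.sum_insert (by decide), Finset.sum_singleton]
      simp [bdKernel, h0D, h1D]
    rw [hsum] at h
    norm_num at h
    linarith
  -- balance at interior states 1 ≤ d, d + 1 < D
  have hint : ∀ d : ℕ, 1 ≤ d → d + 1 < D →
      π d = π (d - 1) * lam + π d * (1 - lam - mu) + π (d + 1) * mu := by
    intro d hd1 hdD
    have h := hstat d
    rw [hsplit d] at h
    have hd0 : d ≠ 0 := by omega
    have hm1 : (d - 1) < D := by omega
    have hmD : d < D := by omega
    have hpD : d + 1 < D := hdD
    have hsum : ∑ j ∈ ({d - 1, d, d + 1} : Finset ℕ),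
        π j * ((if j < D then 1 else 1 - eps) * bdKernel lam mu j d) =
        π (d - 1) * lam + π d * (1 - lam - mu) + π (d + 1) * mu := by
      have hne1 : (d - 1 : ℕ) ∉ ({d, d + 1} : Finset ℕ) := by
        simp only [Finset.mem_insert, Finset.mem_singleton]; omega
      have hne2 : (d : ℕ) ∉ ({d + 1} : Finset ℕ) := by
        simp only [Finset.mem_singleton]; omega
      rw [Finset.sum_insert hne1, Finset.sum_insert hne2, Finset.sum_singleton]
      have hb1 : bdKernel lam mu (d - 1) d = lam := by
        unfold bdKernel
        rcases eq_or_ne d 1 with rfl | hd1'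
        · norm_num
        · have e0 : d - 1 ≠ 0 := by omega
          have e1 : d = (d - 1) + 1 := by omega
          simp [e0, ← e1]
      have hb2 : bdKernel lam mu d d = 1 - lam - mu := by
        unfold bdKernel
        have e1 : d ≠ d + 1 := by omega
        have e2 : d ≠ d - 1 := by omega
        simp [hd0, e1, e2]
      have hb3 : bdKernel lam mu (d + 1) d = mu := by
        unfold bdKernel
        have e0 : d + 1 ≠ 0 := by omega
        have e1 : d ≠ (d + 1) + 1 := by omega
        have e2 : d = (d + 1) - 1 := by omega
        simp [e0, e1, ← e2]
      rw [hb1, hb2, hb3]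
      simp [hm1, hmD, hpD]
      ring
    rw [hsum] at h
    simp only [hd0, if_neg] at h
    simpa using h
  -- recurrence: lam * π d - mu * π (d+1) = eps * σ for d + 1 < D
  have hrec : ∀ d : ℕ, d + 1 < D → lam * π d - mu * π (d + 1) = eps * σ := by
    intro d
    induction d with
    | zero => intro h; exact h0 (by omega)
    | succ n ih =>
      intro h
      have hb := hint (n + 1) (by omega) h
      have hprev := ih (by omega)
      simp only [Nat.add_sub_cancel] at hb
      nlinarith [hb, hprev]
  -- final induction
  intro d
  induction d with
  | zero =>
    intro _
    simp [pow_zero]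
  | succ n ih =>
    intro hlt
    have hn : n < D := by omega
    have hIH := ih hn
    have hr := hrec n hlt
    have hmu0 : (mu : ℝ) ≠ 0 := ne_of_gt hmu
    have hlm0 : lam - mu ≠ 0 := sub_ne_zero.mpr hne
    have : π (n + 1) = (lam * π n - eps * σ) / mu := by
      field_simp
      linarith
    rw [this, hIH, pow_succ]
    field_simp
    ring
end
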